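/- arXiv:1611.01276 — 3 statements merged into one kernel-verified Lean document; each statement's English description precedes it below -/
import Mathlib

section
/- Let d, k, M be positive integers and let p ∈ [0,1]. Let i* ∈ {1,…,d}. On a probability space, let S_1, …, S_M be mutually independent random subsets of {1,…,d}, each almost surely of cardinality at most k, and suppose P(i* ∈ S_m) ≥ p for every m ∈ {1,…,M}. For each index j define the (random) vote count V(j) = #{m ∈ {1,…,M} : j ∈ S_m}. Then the probability that at most 2k−1 indices j satisfy V(j) > V(i*) (i.e., that i* is among the 2k indices with largest vote counts) is at least B(M, ⌊M/2⌋+1, p) = Σ_{m=⌊M/2⌋+1}^{M} (M choose m) p^m (1−p)^{M−m}. -/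
/-!
If `i*` receives more than `M / 2` of the `M` votes, then so does every index that beats it. The
ballots carry at most `k M` votes in total, so fewer than `2k` indices, `i*` included, can get
that many votes. Hence the event in question contains `{V(i*) > M / 2}`, whose probability is an
upper tail of the Poisson binomial law with parameters `P(i* ∈ S m) ≥ p`. Since such tails are
monotone in each parameter, it dominates the binomial tail with parameter `p`.
-/

open MeasureTheory Finset

section Bernoulli

variable {ι : Type*} [DecidableEq ι]

/-- The probability that a random subset of `s`, containing each `i` independently with
probability `r i`, satisfies `Q`. -/
noncomputable def bernoulliProb (s : Finset ι) (r : ι → ℝ) (Q : Finset ι → Prop)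
    [DecidablePred Q] : ℝ :=
  ∑ T ∈ s.powerset with Q T, (∏ i ∈ T, r i) * ∏ i ∈ s \ T, (1 - r i)

theorem bernoulliProb_insert {s : Finset ι} {a : ι} (ha : a ∉ s) (r : ι → ℝ)
    (Q : Finset ι → Prop) [DecidablePred Q] :
    bernoulliProb (insert a s) r Q =
      (1 - r a) * bernoulliProb s r Q + r a * bernoulliProb s r (fun T ↦ Q (insert a T)) := by
  simp only [bernoulliProb, sum_filter, sum_powerset_insert ha, mul_sum, ← sum_add_distrib]
  refine sum_congr rfl fun T hT ↦ ?_
  have haT : a ∉ T := fun h ↦ ha (mem_powerset.1 hT h)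
  rw [insert_sdiff_of_notMem _ haT, insert_sdiff_insert, sdiff_insert_of_notMem ha,
    prod_insert haT, prod_insert (notMem_sdiff_of_notMem_left ha)]
  split_ifs <;> ring

theorem bernoulliProb_le_of_imp {s : Finset ι} {r : ι → ℝ} (h0 : ∀ i, 0 ≤ r i)
    (h1 : ∀ i, r i ≤ 1) {Q Q' : Finset ι → Prop} [DecidablePred Q] [DecidablePred Q']
    (h : ∀ T, Q T → Q' T) : bernoulliProb s r Q ≤ bernoulliProb s r Q' :=
  sum_le_sum_of_subset_of_nonneg (monotone_filter_right _ fun T _ ↦ h T) fun _ _ _ ↦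
    mul_nonneg (prod_nonneg fun i _ ↦ h0 i) (prod_nonneg fun i _ ↦ sub_nonneg.2 (h1 i))

theorem bernoulliProb_mono {r r' : ι → ℝ} (h0 : ∀ i, 0 ≤ r i) (hr : r ≤ r')
    (h1 : ∀ i, r' i ≤ 1) (s : Finset ι) {Q : Finset ι → Prop} [DecidablePred Q]
    (hQ : Monotone Q) : bernoulliProb s r Q ≤ bernoulliProb s r' Q := by
  induction s using Finset.induction_on generalizing Q with
  | empty => simp [bernoulliProb, sum_filter]
  | insert a s ha ih =>
    have hQa : Monotone fun T ↦ Q (insert a T) := fun _ _ h ↦ hQ (insert_subset_insert a h)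
    -- `bernoulliProb_insert` makes the probability affine in `r a`; the slope is nonnegative
    -- because `Q` is upward closed.
    have hslope : bernoulliProb s r' Q ≤ bernoulliProb s r' (fun T ↦ Q (insert a T)) :=
      bernoulliProb_le_of_imp (fun i ↦ (h0 i).trans (hr i)) h1 fun T ↦ hQ (subset_insert a T)
    have hra : 0 ≤ 1 - r a := sub_nonneg.2 ((hr a).trans (h1 a))
    rw [bernoulliProb_insert ha, bernoulliProb_insert ha]
    calc _ ≤ (1 - r a) * bernoulliProb s r' Q
            + r a * bernoulliProb s r' (fun T ↦ Q (insert a T)) :=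
          add_le_add (mul_le_mul_of_nonneg_left (ih hQ) hra)
            (mul_le_mul_of_nonneg_left (ih hQa) (h0 a))
      _ ≤ _ := by linarith [mul_nonneg (sub_nonneg.2 (hr a)) (sub_nonneg.2 hslope)]

theorem bernoulliProb_const_card_le (s : Finset ι) (p : ℝ) (t : ℕ) :
    bernoulliProb s (fun _ ↦ p) (fun T ↦ t ≤ #T) =
      ∑ m ∈ Icc t #s, ((#s).choose m : ℝ) * p ^ m * (1 - p) ^ (#s - m) := by
  set f : ℕ → ℝ := fun m ↦ if t ≤ m then p ^ m * (1 - p) ^ (#s - m) else 0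
  have hterm : ∀ T ∈ s.powerset,
      (if t ≤ #T then (∏ _i ∈ T, p) * ∏ _i ∈ s \ T, (1 - p) else 0) = f #T := fun T hT ↦ by
    rw [prod_const, prod_const, card_sdiff_of_subset (mem_powerset.1 hT)]
  have hIcc : {m ∈ range (#s + 1) | t ≤ m} = Icc t #s := by
    ext; simp only [mem_filter, mem_range, Order.lt_add_one_iff, mem_Icc]; omega
  rw [bernoulliProb, sum_filter, sum_congr rfl hterm, sum_powerset_apply_card, ← hIcc,
    sum_filter]
  refine sum_congr rfl fun m _ ↦ ?_
  simp only [f, nsmul_eq_mul]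
  split_ifs <;> ring

end Bernoulli

section Votes

variable {ι α : Type*} [Fintype ι] [Fintype α] [DecidableEq α]

def votes (s : ι → Finset α) (j : α) : ℕ := #{m | j ∈ s m}

theorem sum_votes (s : ι → Finset α) : ∑ j, votes s j = ∑ m, #(s m) := by
  simpa [votes, bipartiteAbove, bipartiteBelow] using
    (sum_card_bipartiteAbove_eq_sum_card_bipartiteBelow (s := univ) (t := univ)
      (r := fun j m ↦ j ∈ s m))

theorem sum_votes_le {s : ι → Finset α} {k : ℕ} (hs : ∀ m, #(s m) ≤ k) :
    ∑ j, votes s j ≤ Fintype.card ι * k := by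
  calc ∑ j, votes s j = ∑ m, #(s m) := sum_votes s
    _ ≤ ∑ _m : ι, k := sum_le_sum fun m _ ↦ hs m
    _ = Fintype.card ι * k := by rw [sum_const, card_univ, smul_eq_mul]

theorem card_votes_ge_lt_of_majority {s : ι → Finset α} {k : ℕ} (hs : ∀ m, #(s m) ≤ k)
    {i : α} (hi : Fintype.card ι < 2 * votes s i) :
    #({j | votes s i ≤ votes s j} : Finset α) < 2 * k := by
  have hk : 0 < k := by
    have := (single_le_sum (fun j _ ↦ Nat.zero_le (votes s j)) (mem_univ i)).trans
      (sum_votes_le hs)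
    exact Nat.pos_of_ne_zero (by rintro rfl; omega)
  refine Nat.lt_of_mul_lt_mul_right (a := votes s i) ?_
  calc #({j | votes s i ≤ votes s j} : Finset α) * votes s i
      ≤ ∑ j ∈ {j | votes s i ≤ votes s j}, votes s j := by
        rw [← smul_eq_mul]; exact card_nsmul_le_sum _ _ _ fun j hj ↦ (mem_filter.1 hj).2
    _ ≤ ∑ j, votes s j := sum_le_sum_of_subset (subset_univ _)
    _ ≤ Fintype.card ι * k := sum_votes_le hs
    _ < 2 * votes s i * k := Nat.mul_lt_mul_of_pos_right hi hk
    _ = 2 * k * votes s i := by ring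

theorem card_votes_gt_le_of_majority {s : ι → Finset α} {k : ℕ} (hs : ∀ m, #(s m) ≤ k)
    {i : α} (hi : Fintype.card ι < 2 * votes s i) :
    #({j | votes s i < votes s j} : Finset α) ≤ 2 * k - 1 := by
  have hsub : ({j | votes s i < votes s j} : Finset α) ⊂
      ({j | votes s i ≤ votes s j} : Finset α) :=
    (ssubset_iff_of_subset (monotone_filter_right _ fun _ _ ↦ le_of_lt)).2
      ⟨i, by simp, by simp⟩
  have := card_lt_card hsub
  have := card_votes_ge_lt_of_majority hs hi
  omega

end Votes

namespace ProbabilityTheory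

variable {Ω ι : Type*} [Fintype ι] [DecidableEq ι] {A : ι → Set Ω}
  [∀ i, DecidablePred (· ∈ A i)]

theorem setOf_filter_mem_eq_iInter (T : Finset ι) :
    {ω | ({i | ω ∈ A i} : Finset ι) = T} = ⋂ i, if i ∈ T then A i else (A i)ᶜ := by
  ext ω
  simp only [Set.mem_ofPred_eq, Set.mem_iInter, Finset.ext_iff, mem_filter, mem_univ, true_and]
  refine forall_congr' fun i ↦ ?_
  split_ifs with hi <;> simp [hi]

variable [MeasurableSpace Ω] {P : Measure Ω}

theorem iIndepSet.measureReal_filter_mem_eq (hA : iIndepSet A P)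
    (hmeas : ∀ i, MeasurableSet (A i)) (T : Finset ι) :
    P.real {ω | ({i | ω ∈ A i} : Finset ι) = T} =
      (∏ i ∈ T, P.real (A i)) * ∏ i ∈ univ \ T, (1 - P.real (A i)) := by
  have := hA.isProbabilityMeasure
  rw [setOf_filter_mem_eq_iInter, measureReal_def,
    ((iIndepSet_iff_iIndep _ _).1 hA).meas_iInter fun i ↦ ?_, ENNReal.toReal_prod,
    ← prod_mul_prod_compl T, compl_eq_univ_sdiff]
  · congr 1 <;> refine prod_congr rfl fun i hi ↦ ?_
    · rw [if_pos hi]; rfl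
    · rw [if_neg (mem_sdiff.1 hi).2, ← probReal_compl_eq_one_sub (hmeas i)]; rfl
  · split_ifs
    exacts [MeasurableSpace.measurableSet_generateFrom (Set.mem_singleton _),
      (MeasurableSpace.measurableSet_generateFrom (Set.mem_singleton _)).compl]

theorem iIndepSet.measureReal_eq_bernoulliProb (hA : iIndepSet A P)
    (hmeas : ∀ i, MeasurableSet (A i)) (Q : Finset ι → Prop) [DecidablePred Q] :
    P.real {ω | Q {i | ω ∈ A i}} = bernoulliProb univ (fun i ↦ P.real (A i)) Q := by
  have := hA.isProbabilityMeasure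
  have hunion : {ω | Q {i | ω ∈ A i}} =
      ⋃ T ∈ ({T | Q T} : Finset (Finset ι)), {ω | ({i | ω ∈ A i} : Finset ι) = T} := by
    ext ω; simp
  have hdisj : Set.PairwiseDisjoint (({T | Q T} : Finset (Finset ι)) : Set (Finset ι))
      fun T ↦ {ω | ({i | ω ∈ A i} : Finset ι) = T} :=
    fun T _ T' _ hTT' ↦ Set.disjoint_left.2 fun ω hT hT' ↦ hTT' (hT.symm.trans hT')
  rw [hunion, measureReal_biUnion_finset hdisj, bernoulliProb, powerset_univ]
  · exact sum_congr rfl fun T _ ↦ hA.measureReal_filter_mem_eq hmeas T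
  · intro T _
    rw [setOf_filter_mem_eq_iInter]
    exact MeasurableSet.iInter fun i ↦ by split_ifs; exacts [hmeas i, (hmeas i).compl]

end ProbabilityTheory

theorem pvtree_global_voting_probability_bound_general
    {Ω : Type*} [MeasurableSpace Ω] (P : Measure Ω) [IsProbabilityMeasure P]
    (d k M : ℕ)
    (p : ℝ) (hp0 : 0 ≤ p)
    (istar : Fin d)
    (S : Fin M → Ω → Finset (Fin d))
    (hmeas : ∀ m, @Measurable Ω (Finset (Fin d)) _ ⊤ (S m))
    (hindep : ProbabilityTheory.iIndepFun
      (m := fun _ : Fin M => (⊤ : MeasurableSpace (Finset (Fin d)))) S P)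
    (hcard : ∀ m, ∀ᵐ ω ∂P, (S m ω).card ≤ k)
    (hp : ∀ m, p ≤ (P {ω | istar ∈ S m ω}).toReal) :
    ∑ m ∈ Finset.Icc (M / 2 + 1) M, (M.choose m : ℝ) * p ^ m * (1 - p) ^ (M - m)
      ≤ (P {ω |
          (Finset.univ.filter (fun j : Fin d =>
              (Finset.univ.filter (fun m : Fin M => istar ∈ S m ω)).card
                < (Finset.univ.filter (fun m : Fin M => j ∈ S m ω)).card)).card
            ≤ 2 * k - 1}).toReal := by
  let A : Fin M → Set Ω := fun m ↦ {ω | istar ∈ S m ω}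
  have hA : ∀ m, MeasurableSet (A m) := fun m ↦ hmeas m (t := {x | istar ∈ x}) trivial
  have hAindep : ProbabilityTheory.iIndepSet A P :=
    ProbabilityTheory.iIndep_comap_mem_iff.1
      (hindep.comp (fun _ x ↦ istar ∈ x) fun _ ↦ measurable_from_top)
  have hmajority : {ω | M / 2 + 1 ≤ #({m | ω ∈ A m} : Finset (Fin M))} ≤ᵐ[P] {ω |
      #({j | votes (S · ω) istar < votes (S · ω) j} : Finset (Fin d)) ≤ 2 * k - 1} := by
    filter_upwards [ae_all_iff.2 hcard] with ω hω hmaj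
    refine card_votes_gt_le_of_majority hω ?_
    have : M / 2 + 1 ≤ votes (S · ω) istar := hmaj
    rw [Fintype.card_fin]
    omega
  calc _ = bernoulliProb univ (fun _ ↦ p) (fun T ↦ M / 2 + 1 ≤ #T) := by
        rw [bernoulliProb_const_card_le, card_univ, Fintype.card_fin]
    _ ≤ bernoulliProb univ (fun m ↦ P.real (A m)) (fun T ↦ M / 2 + 1 ≤ #T) :=
        bernoulliProb_mono (fun _ ↦ hp0) hp (fun _ ↦ measureReal_le_one) _
          fun _ _ h ↦ le_trans' (card_le_card h)
    _ = P.real {ω | M / 2 + 1 ≤ #({m | ω ∈ A m} : Finset (Fin M))} :=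
        (hAindep.measureReal_eq_bernoulliProb hA _).symm
    _ ≤ _ := ENNReal.toReal_mono (measure_ne_top P _) (measure_mono_ae hmajority)

/-- **Theorem 1 of the PV-Tree paper (probabilistic skeleton of global voting).**
Let `S 1, …, S M` be mutually independent random subsets of `{1,…,d}`, each
almost surely of cardinality at most `k`, with `P(i* ∈ S m) ≥ p` for every `m`.
With vote counts `V j = #{m : j ∈ S m}`, the probability that at most `2k − 1`
indices `j` satisfy `V j > V i*` (i.e. that `i*` is among the `2k` indices with
largest vote counts) is at least the binomial tail
`B(M, ⌊M/2⌋+1, p) = Σ_{m=⌊M/2⌋+1}^{M} (M choose m) p^m (1−p)^{M−m}`. -/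
theorem pvtree_global_voting_probability_bound
    {Ω : Type*} [MeasurableSpace Ω] (P : Measure Ω) [IsProbabilityMeasure P]
    (d k M : ℕ) (hd : 0 < d) (hk : 0 < k) (hM : 0 < M)
    (p : ℝ) (hp0 : 0 ≤ p) (hp1 : p ≤ 1)
    (istar : Fin d)
    (S : Fin M → Ω → Finset (Fin d))
    (hmeas : ∀ m, @Measurable Ω (Finset (Fin d)) _ ⊤ (S m))
    (hindep : ProbabilityTheory.iIndepFun
      (m := fun _ : Fin M => (⊤ : MeasurableSpace (Finset (Fin d)))) S P)
    (hcard : ∀ m, ∀ᵐ ω ∂P, (S m ω).card ≤ k)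
    (hp : ∀ m, p ≤ (P {ω | istar ∈ S m ω}).toReal) :
    ∑ m ∈ Finset.Icc (M / 2 + 1) M, (M.choose m : ℝ) * p ^ m * (1 - p) ^ (M - m)
      ≤ (P {ω |
          (Finset.univ.filter (fun j : Fin d =>
              (Finset.univ.filter (fun m : Fin M => istar ∈ S m ω)).card
                < (Finset.univ.filter (fun m : Fin M => j ∈ S m ω)).card)).card
            ≤ 2 * k - 1}).toReal :=
  pvtree_global_voting_probability_bound_general P d k M p hp0 istar S hmeas hindep hcard hp
end

section
/- If an index i* ∈ {1,…,d} satisfies V(i*) ≥ ⌊M/2⌋ + 1 (i.e., a strict majority of the M machines select i*), then the number of indices j with V(j) ≥ ⌊M/2⌋ + 1 is at most 2k − 1; consequently at most 2k − 1 indices j satisfy V(j) ≥ V(i*), so i* is contained in the set of 2k indices with largest vote counts. -/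
/-!
Counting incidences `(m, j)` with `j ∈ S m` in two ways gives `∑ j, V j = ∑ m, #(S m) ≤ M k`.
Each index with a strict majority contributes more than `M / 2` to the left-hand side, so fewer
than `2k` indices can have one; every `j` with `V j ≥ V i*` is such an index.
-/

open Finset

namespace Finset

variable {ι α : Type*} [Fintype ι] [Fintype α] [DecidableEq α]

theorem sum_card_filter_mem_eq_sum_card (S : ι → Finset α) :
    ∑ j, #{m | j ∈ S m} = ∑ m, #(S m) := by
  have := sum_card_bipartiteAbove_eq_sum_card_bipartiteBelow
    (s := (univ : Finset α)) (t := (univ : Finset ι)) (r := fun j m => j ∈ S m)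
  simpa [bipartiteAbove, bipartiteBelow, filter_mem_eq_inter] using this

theorem sum_card_filter_mem_le {S : ι → Finset α} {k : ℕ} (hS : ∀ m, #(S m) ≤ k) :
    ∑ j, #{m | j ∈ S m} ≤ Fintype.card ι * k := by
  rw [sum_card_filter_mem_eq_sum_card]
  simpa using sum_le_sum fun m (_ : m ∈ univ) => hS m

theorem card_filter_le_card_filter_mem_mul_le {S : ι → Finset α} {k : ℕ} (hS : ∀ m, #(S m) ≤ k)
    (t : ℕ) : #{j | t ≤ #{m | j ∈ S m}} * t ≤ Fintype.card ι * k :=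
  calc #{j | t ≤ #{m | j ∈ S m}} * t
      ≤ ∑ j ∈ {j | t ≤ #{m | j ∈ S m}}, #{m | j ∈ S m} := by
        simpa using card_nsmul_le_sum _ _ t fun j hj => (mem_filter.mp hj).2
    _ ≤ ∑ j, #{m | j ∈ S m} := sum_le_sum_of_subset (subset_univ _)
    _ ≤ Fintype.card ι * k := sum_card_filter_mem_le hS

theorem card_filter_majority_le {S : ι → Finset α} {k : ℕ} (hS : ∀ m, #(S m) ≤ k) :
    #{j | Fintype.card ι / 2 + 1 ≤ #{m | j ∈ S m}} ≤ 2 * k - 1 := by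
  have hcount := card_filter_le_card_filter_mem_mul_le hS (Fintype.card ι / 2 + 1)
  have hlt : Fintype.card ι < 2 * (Fintype.card ι / 2 + 1) := by omega
  -- `2 * k - 1` truncates to `0` at `k = 0`, so that case needs `c = 0`, not `c < 2k`.
  rcases Nat.eq_zero_or_pos k with rfl | hk
  · simpa using hcount
  · have : #{j | Fintype.card ι / 2 + 1 ≤ #{m | j ∈ S m}} < 2 * k := by
      by_contra! h
      nlinarith
    omega

end Finset

theorem pvtree_majority_global_voting_general
    (M d k : ℕ)
    (S : Fin M → Finset (Fin d)) (hcard : ∀ m, (S m).card ≤ k)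
    (istar : Fin d)
    (hmaj : M / 2 + 1 ≤ (Finset.univ.filter (fun m : Fin M => istar ∈ S m)).card) :
    (Finset.univ.filter (fun j : Fin d =>
        M / 2 + 1 ≤ (Finset.univ.filter (fun m : Fin M => j ∈ S m)).card)).card
      ≤ 2 * k - 1 ∧
    (Finset.univ.filter (fun j : Fin d =>
        (Finset.univ.filter (fun m : Fin M => istar ∈ S m)).card
          ≤ (Finset.univ.filter (fun m : Fin M => j ∈ S m)).card)).card
      ≤ 2 * k - 1 := by
  have hmajority := card_filter_majority_le hcard
  rw [Fintype.card_fin] at hmajority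
  refine ⟨hmajority, (card_le_card fun j hj => ?_).trans hmajority⟩
  simp only [mem_filter, mem_univ, true_and] at hj ⊢
  exact hmaj.trans hj

/-- **Global-voting correctness (proof of Theorem 1 of the PV-Tree paper).**
Let `S 1, …, S M` be subsets of `{1,…,d}`, each of cardinality at most `k`, and
let `V j = #{m : j ∈ S m}`. If an index `i*` satisfies `V i* ≥ ⌊M/2⌋ + 1`
(a strict majority of the machines select `i*`), then the number of indices `j`
with `V j ≥ ⌊M/2⌋ + 1` is at most `2k − 1`; consequently at most `2k − 1` indices
`j` satisfy `V j ≥ V i*`, so `i*` is among the `2k` indices with largest vote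
counts. -/
theorem pvtree_majority_global_voting
    (M d k : ℕ) (hM : 0 < M) (hd : 0 < d) (hk : 0 < k)
    (S : Fin M → Finset (Fin d)) (hcard : ∀ m, (S m).card ≤ k)
    (istar : Fin d)
    (hmaj : M / 2 + 1 ≤ (Finset.univ.filter (fun m : Fin M => istar ∈ S m)).card) :
    (Finset.univ.filter (fun j : Fin d =>
        M / 2 + 1 ≤ (Finset.univ.filter (fun m : Fin M => j ∈ S m)).card)).card
      ≤ 2 * k - 1 ∧
    (Finset.univ.filter (fun j : Fin d =>
        (Finset.univ.filter (fun m : Fin M => istar ∈ S m)).card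
          ≤ (Finset.univ.filter (fun m : Fin M => j ∈ S m)).card)).card
      ≤ 2 * k - 1 :=
  pvtree_majority_global_voting_general M d k S hcard istar hmaj
end

section
/- Let (Ω, P) be a probability space and let a_1, …, a_d be real random variables (the empirical informativeness scores). Suppose P( |a_j − b(j)| > l_j ) ≤ δ_j for every j ∉ T and P( |a_{i*} − b(i*)| > l* ) ≤ δ*. Then with probability at least 1 − δ* − Σ_{j∉T} δ_j, at most k−1 indices j ∈ {1,…,d} satisfy a_j > a_{i*}; i.e., the most informative attribute i* is among the top-k indices of the empirical scores. -/
open scoped Classical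

open MeasureTheory

/-! On the event that `a i*` lies within `l*` of `b i*` and each `a j`, `j ∉ T`, lies within
`l j` of `b j`, every attribute outside `T` scores at most `(b i* + b j) / 2 ≤ a i*`, so only the
`k - 1` other members of `T` can beat `i*`. A union bound over the `1 + |Tᶜ|` failure events
gives the probability. -/

theorem le_of_abs_sub_le_half_sub {x y u v : ℝ}
    (hx : |x - u| ≤ (v - u) / 2) (hy : |y - v| ≤ (v - u) / 2) : x ≤ y := by
  linarith [(abs_le.mp hx).2, (abs_le.mp hy).1]

theorem card_filter_lt_le_card_sub_one {ι : Type*} [Fintype ι] {a : ι → ℝ} {T : Finset ι}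
    {i : ι} (hi : i ∈ T) (h : ∀ j ∉ T, a j ≤ a i) :
    (Finset.univ.filter fun j => a i < a j).card ≤ T.card - 1 := by
  rw [← Finset.card_erase_of_mem hi]
  refine Finset.card_le_card fun j hj => ?_
  have hlt : a i < a j := (Finset.mem_filter.mp hj).2
  exact Finset.mem_erase.mpr ⟨fun hji => hlt.ne (congrArg a hji).symm,
    by_contra fun hjT => (h j hjT).not_gt hlt⟩

theorem one_sub_sub_sum_le_measureReal {Ω ι : Type*} [MeasurableSpace Ω] (P : Measure Ω)
    [IsProbabilityMeasure P] {A E₀ : Set Ω} {s : Finset ι} {E : ι → Set Ω} {δ₀ : ℝ}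
    {δ : ι → ℝ} (hcover : Aᶜ ⊆ E₀ ∪ ⋃ i ∈ s, E i) (hδ₀ : P.real E₀ ≤ δ₀)
    (hδ : ∀ i ∈ s, P.real (E i) ≤ δ i) :
    1 - δ₀ - ∑ i ∈ s, δ i ≤ P.real A := by
  have hsplit : 1 ≤ P.real A + P.real Aᶜ := by
    simpa only [Set.union_compl_self, probReal_univ] using measureReal_union_le (μ := P) A Aᶜ
  have hunion : P.real Aᶜ ≤ P.real E₀ + ∑ i ∈ s, P.real (E i) :=
    (measureReal_mono hcover).trans <| (measureReal_union_le _ _).trans <|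
      add_le_add_right (measureReal_biUnion_finset_le s E) _
  linarith [Finset.sum_le_sum hδ]

/-- **Probabilistic local-voting guarantee (proof of Theorem 1, PV-Tree paper).**
Let `b : {1,…,d} → ℝ` be the population informativeness scores, `i*` a maximizer
of `b`, and `T` a top-`k` set for `b` containing `i*` (with `k < d`). For `j ∉ T`
let `l j = (b i* − b j)/2` and `l* = min_{j ∉ T} l j`. Let `a 1, …, a d` be real
random variables (the empirical scores) with `P(|a j − b j| > l j) ≤ δ j` for
every `j ∉ T` and `P(|a i* − b i*| > l*) ≤ δ*`. Then with probability at least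
`1 − δ* − Σ_{j ∉ T} δ j`, at most `k − 1` indices `j` satisfy `a j > a i*`,
i.e. `i*` is among the top-`k` indices of the empirical scores. -/
theorem pvtree_local_voting_probability_bound
    {Ω : Type*} [MeasurableSpace Ω] (P : Measure Ω) [IsProbabilityMeasure P]
    (d k : ℕ) (hkd : k < d)
    (b : Fin d → ℝ) (istar : Fin d)
    (T : Finset (Fin d)) (hTcard : T.card = k) (hiT : istar ∈ T)
    (a : Fin d → Ω → ℝ)
    (δ : Fin d → ℝ) (δstar : ℝ)
    (hδ : ∀ j ∉ T, (P {ω | (b istar - b j) / 2 < |a j ω - b j|}).toReal ≤ δ j)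
    (hδstar : (P {ω |
        Tᶜ.inf' (Finset.card_pos.mp (by
            rw [Finset.card_compl, hTcard, Fintype.card_fin]; omega))
          (fun j => (b istar - b j) / 2)
        < |a istar ω - b istar|}).toReal ≤ δstar) :
    1 - δstar - ∑ j ∈ Tᶜ, δ j
      ≤ (P {ω |
          (Finset.univ.filter (fun j : Fin d => a istar ω < a j ω)).card
            ≤ k - 1}).toReal := by
  refine one_sub_sub_sum_le_measureReal P (fun ω hω => ?_) hδstar
    fun j hj => hδ j (Finset.mem_compl.mp hj)
  simp only [Set.mem_compl_iff, Set.mem_ofPred_eq, Set.mem_union, Set.mem_iUnion,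
    exists_prop, not_le] at hω ⊢
  by_contra! hgood
  obtain ⟨hstar, hout⟩ := hgood
  refine hω.not_ge (hTcard ▸ card_filter_lt_le_card_sub_one (a := (a · ω)) hiT fun j hj => ?_)
  have hj : j ∈ Tᶜ := Finset.mem_compl.mpr hj
  exact le_of_abs_sub_le_half_sub (hout j hj)
    (hstar.trans (Finset.inf'_le (fun j => (b istar - b j) / 2) hj))
end
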